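/- arXiv:2311.12614 — 3 statements merged into one kernel-verified Lean document; each statement's English description precedes it below -/
import Mathlib

section
/- Every spinor-vector matrix A = [[s₁, v₁], [v₂, s₂]] (with s₁, s₂ spinors and v₁, v₂ vectors in the quaternions) that is self-adjoint (s₁, s₂ real and v₂ = -v₁) has only real eigenvalues, the two eigenvalues being (s₁ + s₂ ± √((s₁-s₂)² - 4v₁²))/2, and note -4v₁² = 4|v₁|² ≥ 0 so the discriminant is nonnegative. -/
/-!
Write the eigen-equations as `v₁ x_v = x_s (λ - s₁)` and `(-v₁) x_s = x_v (λ - s₂)`. Applying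
`v₁` once more and using that `v₁ (-v₁) = |v₁|²` is a central real number gives
`x ((λ - s₁)(λ - s₂) - |v₁|²) = 0` for both components `x` of the eigenvector, so
`(λ - s₁)(λ - s₂) = |v₁|²` in the division ring `ℍ`. A quaternion root of a real quadratic with
nonnegative discriminant is real: its imaginary part `u` satisfies `(2 re λ - s₁ - s₂) u = 0`,
and `u ≠ 0` would force the discriminant to be `-4|u|² < 0`.
-/

noncomputable section

abbrev Q2 : Type := Quaternion ℝ

theorem mul_eq_of_antidiagonal_eigen {R : Type*} [Ring R] [NoZeroDivisors R]
    {u w x y α β : R} (hαβ : Commute α β) (huw : Commute u w)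
    (hx : Commute (u * w) x) (hy : Commute (u * w) y)
    (h₁ : u * y = x * α) (h₂ : w * x = y * β) (hxy : ¬(x = 0 ∧ y = 0)) :
    α * β = u * w := by
  have hx' : x * (α * β - u * w) = 0 := by
    rw [mul_sub, ← mul_assoc, ← h₁, mul_assoc, ← h₂, ← mul_assoc, hx.eq, sub_self]
  have hy' : y * (α * β - u * w) = 0 := by
    rw [mul_sub, hαβ.eq, ← mul_assoc, ← h₂, mul_assoc, ← h₁, ← mul_assoc, ← huw.eq, hy.eq,
      sub_self]
  rw [← sub_eq_zero]
  by_contra hne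
  exact hxy ⟨(mul_eq_zero.mp hx').resolve_right hne, (mul_eq_zero.mp hy').resolve_right hne⟩

theorem Real.eq_of_sub_mul_sub_eq {a b r t : ℝ} (hD : 0 ≤ (a - b) ^ 2 + 4 * r)
    (h : (t - a) * (t - b) = r) :
    t = (a + b + √((a - b) ^ 2 + 4 * r)) / 2 ∨ t = (a + b - √((a - b) ^ 2 + 4 * r)) / 2 := by
  have hdisc : discrim 1 (-(a + b)) (a * b - r) =
      √((a - b) ^ 2 + 4 * r) * √((a - b) ^ 2 + 4 * r) := by
    rw [Real.mul_self_sqrt hD, discrim]; ring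
  simpa using (quadratic_eq_zero_iff one_ne_zero hdisc t).mp (by linear_combination h)

namespace Quaternion

theorem im_eq_zero_of_sub_mul_sub_eq {a b r : ℝ} {q : ℍ} (hD : 0 ≤ (a - b) ^ 2 + 4 * r)
    (h : (q - a) * (q - b) = r) : q.im = 0 := by
  have hre := congrArg (·.re) h
  have hI := congrArg (·.imI) h
  have hJ := congrArg (·.imJ) h
  have hK := congrArg (·.imK) h
  simp only [re_mul, imI_mul, imJ_mul, imK_mul, re_sub, imI_sub, imJ_sub, imK_sub, re_coe,
    imI_coe, imJ_coe, imK_coe, sub_zero] at hre hI hJ hK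
  rw [← normSq_eq_zero, normSq_def', re_im, imI_im, imJ_im, imK_im]
  set d := 2 * q.re - a - b
  set s := q.imI ^ 2 + q.imJ ^ 2 + q.imK ^ 2
  have hdisc : (a - b) ^ 2 + 4 * r = d ^ 2 - 4 * s := by linear_combination -4 * hre
  have hds : d * s = 0 := by linear_combination q.imI * hI + q.imJ * hJ + q.imK * hK
  rcases mul_eq_zero.mp hds with hd | hs
  · nlinarith [sq_nonneg q.imI, sq_nonneg q.imJ, sq_nonneg q.imK]
  · simpa using hs

theorem eq_coe_of_sub_mul_sub_eq {a b r : ℝ} {q : ℍ} (hD : 0 ≤ (a - b) ^ 2 + 4 * r)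
    (h : (q - a) * (q - b) = r) :
    q = ((a + b + √((a - b) ^ 2 + 4 * r)) / 2 : ℝ) ∨
      q = ((a + b - √((a - b) ^ 2 + 4 * r)) / 2 : ℝ) := by
  have him := im_eq_zero_of_sub_mul_sub_eq hD h
  rw [← re_add_im q, him, add_zero] at h ⊢
  norm_cast at h ⊢
  simp only [coe_inj]
  exact Real.eq_of_sub_mul_sub_eq hD (coe_injective h)

theorem mul_self_eq_neg_norm_sq {v : ℍ} (hv : v.re = 0) : v * v = -((‖v‖ ^ 2 : ℝ) : ℍ) := by
  rw [← sq, sq_eq_neg_normSq.mpr hv, normSq_eq_norm_mul_self, sq]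

end Quaternion

theorem selfadjoint_SV_eigenvalues_general (s1 s2 : ℝ) (v1 : Q2)
    (hv1 : v1.re = 0 ∧ v1.imK = 0)
    (lam : Q2) (xs xv : Q2)
    (hx : ¬(xs = 0 ∧ xv = 0))
    (h1 : (s1 : Q2) * xs + v1 * xv = xs * lam)
    (h2 : (-v1) * xs + (s2 : Q2) * xv = xv * lam) :
    (-(4 : Q2) * v1 ^ 2 = ((4 * ‖v1‖ ^ 2 : ℝ) : Q2)) ∧
    (0 ≤ (s1 - s2) ^ 2 + 4 * ‖v1‖ ^ 2) ∧
    (lam = (((s1 + s2 + Real.sqrt ((s1 - s2) ^ 2 + 4 * ‖v1‖ ^ 2)) / 2 : ℝ) : Q2) ∨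
     lam = (((s1 + s2 - Real.sqrt ((s1 - s2) ^ 2 + 4 * ‖v1‖ ^ 2)) / 2 : ℝ) : Q2)) := by
  have hvv := Quaternion.mul_self_eq_neg_norm_sq hv1.1
  have hvw : v1 * -v1 = ((‖v1‖ ^ 2 : ℝ) : Q2) := by rw [mul_neg, hvv, neg_neg]
  have hD : 0 ≤ (s1 - s2) ^ 2 + 4 * ‖v1‖ ^ 2 := by positivity
  have hchar : (lam - s1) * (lam - s2) = v1 * -v1 := by
    refine mul_eq_of_antidiagonal_eigen ?_ (Commute.refl v1).neg_right
      (hvw ▸ Quaternion.coe_commute _ _) (hvw ▸ Quaternion.coe_commute _ _) ?_ ?_ hx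
    · exact ((Commute.refl lam).sub_right (Quaternion.coe_commute s2 lam).symm).sub_left
        (Quaternion.coe_commute s1 _)
    · rw [mul_sub, ← (Quaternion.coe_commute s1 xs).eq, ← h1, add_sub_cancel_left]
    · rw [mul_sub, ← (Quaternion.coe_commute s2 xv).eq, ← h2, add_sub_cancel_right]
  refine ⟨?_, hD, Quaternion.eq_coe_of_sub_mul_sub_eq hD (hchar.trans hvw)⟩
  rw [sq, hvv, neg_mul_neg]
  push_cast
  rfl

/-- A self-adjoint spinor-vector matrix A = [[s₁, v₁], [-v₁, s₂]] (s₁, s₂ real scalars,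
v₁ a vector) has only real eigenvalues.  Its eigenvalues, as in the general SV eigenvalue
formula λ = (s₁ + conj(s₂) ± √((s₁-conj(s₂))² + 4v₁v₂))/2, are
(s₁ + s₂ ± √((s₁-s₂)² + 4|v₁|²))/2, where the discriminant (s₁-s₂)² - 4v₁² =
(s₁-s₂)² + 4|v₁|² is nonnegative since -4v₁² = 4|v₁|².  An eigenvalue is a spinor
λ ∈ Λ₀⊕Λ₂ with Ax = xλ for some nonzero x = (xₛ, x_v)ᵀ ∈ Z. -/
theorem selfadjoint_SV_eigenvalues (s1 s2 : ℝ) (v1 : Q2)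
    (hv1 : v1.re = 0 ∧ v1.imK = 0)
    (lam : Q2) (hlam : lam.imI = 0 ∧ lam.imJ = 0)
    (xs xv : Q2) (hxs : xs.imI = 0 ∧ xs.imJ = 0) (hxv : xv.re = 0 ∧ xv.imK = 0)
    (hx : ¬(xs = 0 ∧ xv = 0))
    (h1 : (s1 : Q2) * xs + v1 * xv = xs * lam)
    (h2 : (-v1) * xs + (s2 : Q2) * xv = xv * lam) :
    (-(4 : Q2) * v1 ^ 2 = ((4 * ‖v1‖ ^ 2 : ℝ) : Q2)) ∧
    (0 ≤ (s1 - s2) ^ 2 + 4 * ‖v1‖ ^ 2) ∧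
    (lam = (((s1 + s2 + Real.sqrt ((s1 - s2) ^ 2 + 4 * ‖v1‖ ^ 2)) / 2 : ℝ) : Q2) ∨
     lam = (((s1 + s2 - Real.sqrt ((s1 - s2) ^ 2 + 4 * ‖v1‖ ^ 2)) / 2 : ℝ) : Q2)) :=
  selfadjoint_SV_eigenvalues_general s1 s2 v1 hv1 lam xs xv hx h1 h2
end
end

section
/- Let C = {z ∈ ℂ^d : |⟨a,z⟩ + b| ≤ ε} with 0 ≠ a ∈ ℂ^d, b ∈ ℂ, ε ≥ 0. For z ∉ C, the nearest-point projection of z onto C (with respect to the real inner product on ℂ^d) is p = z + ((β(z) - ⟨a,z⟩ - b)/‖a‖²)·a, where β(z) = ε(⟨a,z⟩ + b)/|⟨a,z⟩ + b|; and for z ∈ C the projection is z itself. -/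
/-!
Moving `z` by `(c / ‖a‖²) • a` changes `⟪a, z⟫ + b` by exactly `c` at cost `‖c‖ / ‖a‖`, while by
Cauchy–Schwarz any `w` with `‖⟪a, w⟫ + b‖ ≤ ε` satisfies `‖⟪a, z⟫ + b‖ - ε ≤ ‖a‖ * dist z w`.
For `z ∉ C`, the choice `c = β - ip` radially retracts `ip` onto the circle of radius `ε`,
so `p ∈ C` and the cost `(‖ip‖ - ε) / ‖a‖` meets that lower bound.
-/

open scoped InnerProductSpace

section

variable {𝕜 E : Type*} [RCLike 𝕜] [NormedAddCommGroup E] [InnerProductSpace 𝕜 E]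

theorem norm_inner_add_sub_norm_inner_add_le (a z w : E) (b : 𝕜) :
    ‖⟪a, z⟫_𝕜 + b‖ - ‖⟪a, w⟫_𝕜 + b‖ ≤ ‖a‖ * dist z w :=
  calc ‖⟪a, z⟫_𝕜 + b‖ - ‖⟪a, w⟫_𝕜 + b‖ ≤ ‖(⟪a, z⟫_𝕜 + b) - (⟪a, w⟫_𝕜 + b)‖ :=
        norm_sub_norm_le _ _
    _ = ‖⟪a, z - w⟫_𝕜‖ := by rw [inner_sub_right, add_sub_add_right_eq_sub]
    _ ≤ ‖a‖ * ‖z - w‖ := norm_inner_le_norm a (z - w)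
    _ = ‖a‖ * dist z w := by rw [dist_eq_norm]

theorem inner_add_div_norm_sq_smul {a : E} (ha : a ≠ 0) (z : E) (c : 𝕜) :
    ⟪a, z + (c / (‖a‖ : 𝕜) ^ 2) • a⟫_𝕜 = ⟪a, z⟫_𝕜 + c := by
  have hna : (‖a‖ : 𝕜) ^ 2 ≠ 0 := by simpa using ha
  rw [inner_add_right, inner_smul_right, inner_self_eq_norm_sq_to_K, div_mul_cancel₀ _ hna]

theorem dist_add_div_norm_sq_smul (a z : E) (c : 𝕜) :
    dist z (z + (c / (‖a‖ : 𝕜) ^ 2) • a) = ‖c‖ / ‖a‖ := by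
  rcases eq_or_ne a 0 with rfl | ha
  · simp
  have hna : ‖a‖ ≠ 0 := norm_ne_zero_iff.mpr ha
  rw [dist_self_add_right, norm_smul, norm_div, norm_pow, RCLike.norm_ofReal, abs_norm]
  field_simp

theorem norm_ofReal_mul_div_norm {ε : ℝ} (hε : 0 ≤ ε) {x : 𝕜} (hx : x ≠ 0) :
    ‖(ε : 𝕜) * x / (‖x‖ : 𝕜)‖ = ε := by
  have hnx : ‖x‖ ≠ 0 := norm_ne_zero_iff.mpr hx
  rw [norm_div, norm_mul, RCLike.norm_ofReal, RCLike.norm_ofReal, abs_norm, abs_of_nonneg hε]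
  field_simp

theorem norm_ofReal_mul_div_norm_sub_self (ε : ℝ) {x : 𝕜} (hx : x ≠ 0) :
    ‖(ε : 𝕜) * x / (‖x‖ : 𝕜) - x‖ = |ε - ‖x‖| := by
  have hnx : ‖x‖ ≠ 0 := norm_ne_zero_iff.mpr hx
  have hx' : (ε : 𝕜) * x / (‖x‖ : 𝕜) - x = (((ε - ‖x‖) / ‖x‖ : ℝ) : 𝕜) * x := by
    have : (‖x‖ : 𝕜) ≠ 0 := by exact_mod_cast hnx
    push_cast
    field_simp
  rw [hx', norm_mul, RCLike.norm_ofReal, abs_div, abs_norm]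
  field_simp

end

/-- Projection onto C = {z ∈ ℂ^d : |⟨a,z⟩ + b| ≤ ε} (a ≠ 0, ε ≥ 0), with ℂ^d regarded as a
real inner product space: for z ∉ C the nearest point is
z + ((β(z) - ⟨a,z⟩ - b)/‖a‖²)·a with β(z) = ε(⟨a,z⟩+b)/|⟨a,z⟩+b|, and for z ∈ C it is z. -/
theorem projection_onto_sublevel (d : ℕ) (a : EuclideanSpace ℂ (Fin d)) (ha : a ≠ 0)
    (b : ℂ) (ε : ℝ) (hε : 0 ≤ ε) (z : EuclideanSpace ℂ (Fin d)) :
    let C : Set (EuclideanSpace ℂ (Fin d)) :=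
      {w | ‖(inner ℂ a w : ℂ) + b‖ ≤ ε}
    let ip : ℂ := (inner ℂ a z : ℂ) + b
    let β : ℂ := (ε : ℂ) * ip / (‖ip‖ : ℂ)
    let p : EuclideanSpace ℂ (Fin d) :=
      if ‖ip‖ ≤ ε then z else z + ((β - ip) / ((‖a‖ : ℂ) ^ 2)) • a
    p ∈ C ∧ ∀ w ∈ C, dist z p ≤ dist z w := by
  intro C ip β p
  by_cases hz : ‖ip‖ ≤ ε
  · simp only [p, if_pos hz]
    exact ⟨hz, fun w _ => by simp⟩
  have hεip : ε < ‖ip‖ := not_le.mp hz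
  have hip : ip ≠ 0 := norm_pos_iff.mp (hε.trans_lt hεip)
  have hp : p = z + ((β - ip) / (‖a‖ : ℂ) ^ 2) • a := if_neg hz
  -- `exact`, not `rw`: the lemmas' `RCLike.ofReal` agrees with `Complex.ofReal` only up to defeq.
  have hinner : inner ℂ a p = inner ℂ a z + (β - ip) := by
    rw [hp]; exact inner_add_div_norm_sq_smul ha z _
  have hdist : dist z p = ‖β - ip‖ / ‖a‖ := by
    rw [hp]; exact dist_add_div_norm_sq_smul a z _
  have hβ : ‖β‖ = ε := norm_ofReal_mul_div_norm hε hip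
  have hβip : ‖β - ip‖ = -(ε - ‖ip‖) :=
    (norm_ofReal_mul_div_norm_sub_self ε hip).trans (abs_of_neg (sub_neg.mpr hεip))
  refine ⟨?_, fun w hw => ?_⟩
  · show ‖inner ℂ a p + b‖ ≤ ε
    rw [hinner, add_right_comm, add_sub_cancel, hβ]
  · rw [hdist, hβip, div_le_iff₀ (norm_pos_iff.mpr ha)]
    linarith [norm_inner_add_sub_norm_inner_add_le a z w b, show ‖inner ℂ a w + b‖ ≤ ε from hw]
end

section
/- Let T_{A,B} := Id - P_A + P_B R_A be the Douglas–Rachford operator for closed convex sets A, B in a Hilbert space, where P denotes projection and R_A := 2P_A - Id. Then P_A(Fix T_{A,B}) = A ∩ B; in particular, if x is a fixed point of T_{A,B}, then P_A(x) ∈ A ∩ B. -/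
noncomputable section

/-- For nonempty closed convex sets A, B in a real Hilbert space with A ∩ B ≠ ∅, with
metric projections P_A, P_B, the Douglas–Rachford operator T = Id - P_A + P_B ∘ R_A
(R_A = 2P_A - Id) satisfies P_A(Fix T) = A ∩ B. -/
theorem dr_fixed_points_project_to_intersection
    {H : Type*} [NormedAddCommGroup H] [InnerProductSpace ℝ H] [CompleteSpace H]
    (A B : Set H)
    (hAcl : IsClosed A) (hAcv : Convex ℝ A) (hAne : A.Nonempty)
    (hBcl : IsClosed B) (hBcv : Convex ℝ B) (hBne : B.Nonempty)
    (hAB : (A ∩ B).Nonempty)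
    (PA PB : H → H)
    (hPA : ∀ x, PA x ∈ A ∧ ∀ y ∈ A, dist x (PA x) ≤ dist x y)
    (hPB : ∀ x, PB x ∈ B ∧ ∀ y ∈ B, dist x (PB x) ≤ dist x y) :
    PA '' {x : H | x - PA x + PB ((2 : ℝ) • PA x - x) = x} = A ∩ B := by
  have fixA : ∀ y ∈ A, PA y = y := fun y hy => by
    have h := (hPA y).2 y hy
    rw [dist_self] at h
    have h0 : dist y (PA y) = 0 := le_antisymm h dist_nonneg
    rw [dist_comm] at h0
    exact eq_of_dist_eq_zero h0
  have fixB : ∀ y ∈ B, PB y = y := fun y hy => by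
    have h := (hPB y).2 y hy
    rw [dist_self] at h
    have h0 : dist y (PB y) = 0 := le_antisymm h dist_nonneg
    rw [dist_comm] at h0
    exact eq_of_dist_eq_zero h0
  ext y
  constructor
  · rintro ⟨x, hx, rfl⟩
    simp only [Set.mem_setOf_eq] at hx
    have hkey : PB ((2 : ℝ) • PA x - x) = PA x := by
      have := hx
      abel_nf at this ⊢
      linear_combination (norm := abel_nf) this
    refine ⟨(hPA x).1, ?_⟩
    rw [← hkey]
    exact (hPB _).1
  · rintro ⟨hyA, hyB⟩
    refine ⟨y, ?_, fixA y hyA⟩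
    simp only [Set.mem_setOf_eq, fixA y hyA]
    have : (2 : ℝ) • y - y = y := by
      rw [two_smul]; abel
    rw [this, fixB y hyB]
    abel
end
end
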